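/- In the NP-hardness construction of Theorem 3: the constructed digraph D (on vertex set V1 ∪ V2 ∪ V3 ∪ X ∪ Y with the described arcs) contains a perfect out-forest if and only if the 3-dimensional matching instance (V1, V2, V3, E) has a perfect 3-dimensional matching. -/
import Mathlib


/-- `F` is a subdigraph of `D` (same vertex set, arcs included). -/
def Subd {V : Type*} (F D : V → V → Prop) : Prop := ∀ ⦃a b⦄, F a b → D a b

/-- An out-forest: acyclic (no directed cycles) and all in-degrees at most one. -/
def IsOutForest {V : Type*} (F : V → V → Prop) : Prop :=
  Irreflexive (Relation.TransGen F) ∧ ∀ u v w, F u w → F v w → u = v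

/-- `a` and `b` lie in the same weak component (same out-tree) of `F`. -/
def SameTree {V : Type*} (F : V → V → Prop) : V → V → Prop :=
  Relation.ReflTransGen (fun x y => F x y ∨ F y x)

/-- Degree of `v` in the underlying graph of `F` (out-arcs plus in-arcs). -/
noncomputable def udeg {V : Type*} (F : V → V → Prop) (v : V) : ℕ :=
  {w | F v w}.ncard + {w | F w v}.ncard

/-- A weak perfect out-forest of `D`: a spanning out-forest with all underlying degrees odd. -/
def WeakPerfect {V : Type*} (D F : V → V → Prop) : Prop :=
  Subd F D ∧ IsOutForest F ∧ ∀ v, Odd (udeg F v)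

/-- An almost perfect out-forest of `D`: weak perfect, and every arc of `D` not in `F`
goes between different out-trees or is a backward arc. -/
def AlmostPerfect {V : Type*} (D F : V → V → Prop) : Prop :=
  WeakPerfect D F ∧ ∀ u v, D u v → ¬ F u v →
    ¬ SameTree F u v ∨ Relation.TransGen F v u

/-- An even out-forest of `D`: a spanning out-forest all of whose out-trees have even order. -/
def EvenOutForest {V : Type*} (D F : V → V → Prop) : Prop :=
  Subd F D ∧ IsOutForest F ∧ ∀ v, Even ({w | SameTree F v w}.ncard)

/-- A perfect out-forest of `D`: a spanning out-forest with all underlying degrees odd,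
each of whose out-trees is an induced subdigraph of `D`. -/
def PerfectOutForest {V : Type*} (D F : V → V → Prop) : Prop :=
  Subd F D ∧ IsOutForest F ∧ (∀ v, Odd (udeg F v)) ∧
    ∀ a b, SameTree F a b → D a b → F a b

/-- Vertex set of the NP-hardness construction: `V1 ⊕ V2 ⊕ V3` (each of size `k`),
`X` of size `m - k`, and `Y` of size `m`. -/
abbrev Vtx (k m : ℕ) := ((Fin k ⊕ Fin k) ⊕ Fin k) ⊕ (Fin (m - k) ⊕ Fin m)

/-- Arcs of the NP-hardness construction: all arcs from `X` to `Y`; from each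
`y ∈ Y` arcs to the three vertices of its triple `E y`; all arcs in both directions
between `X` and `V1 ∪ V2 ∪ V3`; all arcs in both directions between distinct
vertices of `Y`. -/
def Darc (k m : ℕ) (E : Fin m → Fin k × Fin k × Fin k) :
    Vtx k m → Vtx k m → Prop := fun a b =>
  match a, b with
  | Sum.inr (Sum.inl _), Sum.inr (Sum.inr _) => True
  | Sum.inr (Sum.inr y), Sum.inl (Sum.inl (Sum.inl i)) => (E y).1 = i
  | Sum.inr (Sum.inr y), Sum.inl (Sum.inl (Sum.inr i)) => (E y).2.1 = i
  | Sum.inr (Sum.inr y), Sum.inl (Sum.inr i) => (E y).2.2 = i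
  | Sum.inr (Sum.inl _), Sum.inl _ => True
  | Sum.inl _, Sum.inr (Sum.inl _) => True
  | Sum.inr (Sum.inr y), Sum.inr (Sum.inr y') => y ≠ y'
  | _, _ => False

private lemma sameTree_symm' {V : Type*} {F : V → V → Prop} {a b : V}
    (h : SameTree F a b) : SameTree F b a := by
  induction h with
  | refl => exact Relation.ReflTransGen.refl
  | tail _ h2 ih => exact Relation.ReflTransGen.head (Or.symm h2) ih

private lemma sameTree_of_arc {V : Type*} {F : V → V → Prop} {a b : V}
    (h : F a b) : SameTree F a b := Relation.ReflTransGen.single (Or.inl h)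

private lemma odd_ncard_nonempty {V : Type*} {s : Set V} (h : Odd s.ncard) :
    s.Nonempty := by
  rcases s.eq_empty_or_nonempty with hs | hs
  · rw [hs, Set.ncard_empty] at h; simp at h
  · exact hs


private def Fcon (k m : ℕ) (E : Fin m → Fin k × Fin k × Fin k)
    (S : Finset (Fin m)) (g : Fin (m - k) → Fin m) :
    Vtx k m → Vtx k m → Prop := fun a b =>
  match a, b with
  | Sum.inr (Sum.inl x), Sum.inr (Sum.inr y) => g x = y
  | Sum.inr (Sum.inr y), Sum.inl (Sum.inl (Sum.inl i)) => y ∈ S ∧ (E y).1 = i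
  | Sum.inr (Sum.inr y), Sum.inl (Sum.inl (Sum.inr i)) => y ∈ S ∧ (E y).2.1 = i
  | Sum.inr (Sum.inr y), Sum.inl (Sum.inr i) => y ∈ S ∧ (E y).2.2 = i
  | _, _ => False

private def rnk {k m : ℕ} : Vtx k m → ℕ
  | Sum.inr (Sum.inl _) => 0
  | Sum.inr (Sum.inr _) => 1
  | Sum.inl _ => 2

private def cmpv {k m : ℕ} (y1 y2 y3 : Fin k → Fin m) (g : Fin (m - k) → Fin m) :
    Vtx k m → Fin m
  | Sum.inl (Sum.inl (Sum.inl i)) => y1 i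
  | Sum.inl (Sum.inl (Sum.inr i)) => y2 i
  | Sum.inl (Sum.inr i) => y3 i
  | Sum.inr (Sum.inl x) => g x
  | Sum.inr (Sum.inr y) => y


/-- The constructed digraph has a perfect out-forest iff the 3-dimensional matching
instance has a perfect 3-dimensional matching. -/
theorem stmt17 (k m : ℕ) (hkm : k ≤ m)
    (E : Fin m → Fin k × Fin k × Fin k) (hE : Function.Injective E) :
    (∃ F, PerfectOutForest (Darc k m E) F) ↔
    (∃ S : Finset (Fin m), S.card = k ∧
      (∀ a : Fin k, ∃ y ∈ S, (E y).1 = a) ∧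
      (∀ a : Fin k, ∃ y ∈ S, (E y).2.1 = a) ∧
      (∀ a : Fin k, ∃ y ∈ S, (E y).2.2 = a)) := by
  constructor
  · intro hex
    classical
    obtain ⟨F, hsub, ⟨hirr, hdeg⟩, hodd, hind⟩ := hex
    set X : Fin (m - k) → Vtx k m := fun x => Sum.inr (Sum.inl x) with hX
    set Y : Fin m → Vtx k m := fun y => Sum.inr (Sum.inr y) with hY
    -- no 2-cycles within a tree
    have key : ∀ a b, Darc k m E a b → Darc k m E b a → ¬ SameTree F a b := by
      intro a b hab hba hst
      exact hirr a (Relation.TransGen.head (hind a b hst hab)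
        (Relation.TransGen.single (hind b a (sameTree_symm' hst) hba)))
    have lemB : ∀ (x : Fin (m - k)) (c : (Fin k ⊕ Fin k) ⊕ Fin k),
        ¬ SameTree F (X x) (Sum.inl c) := by
      intro x c
      exact key _ _ trivial trivial
    have lemA : ∀ (y y' : Fin m), y ≠ y' → ¬ SameTree F (Y y) (Y y') := by
      intro y y' hne
      exact key _ _ hne (Ne.symm hne)
    -- V vertices have no out-arcs in F
    have noVout : ∀ (c : (Fin k ⊕ Fin k) ⊕ Fin k) (w : Vtx k m),
        ¬ F (Sum.inl c) w := by
      rintro c (c' | x | y) hF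
      · exact hsub hF
      · exact lemB x c (sameTree_symm' (sameTree_of_arc hF))
      · exact hsub hF
    -- X vertices have no in-arcs
    have noXin : ∀ (w : Vtx k m) (x : Fin (m - k)), ¬ F w (X x) := by
      rintro (c | x' | y) x hF
      · exact lemB x c (sameTree_symm' (sameTree_of_arc hF))
      · exact hsub hF
      · exact hsub hF
    -- every X vertex has an out-neighbor in Y
    have hXout : ∀ x : Fin (m - k), ∃ y : Fin m, F (X x) (Y y) := by
      intro x
      have h := hodd (X x)
      have hin0 : {w | F w (X x)} = ∅ := by
        ext w; simp only [Set.mem_setOf_eq, Set.mem_empty_iff_false, iff_false]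
        exact fun hF => noXin w x hF
      rw [udeg, hin0, Set.ncard_empty, Nat.add_zero] at h
      obtain ⟨w, hw⟩ := odd_ncard_nonempty h
      rcases w with c | x' | y
      · exact absurd (lemB x c (sameTree_of_arc hw)) (fun h => h)
      · exact absurd (hsub hw) (fun h => h)
      · exact ⟨y, hw⟩
    have hXuniq : ∀ x y y', F (X x) (Y y) → F (X x) (Y y') → y = y' := by
      intro x y y' h1 h2
      by_contra hne
      exact lemA y y' hne
        ((sameTree_symm' (sameTree_of_arc h1)).trans (sameTree_of_arc h2))
    set g : Fin (m - k) → Fin m := fun x => Classical.choose (hXout x) with hg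
    have hgF : ∀ x, F (X x) (Y (g x)) := fun x => Classical.choose_spec (hXout x)
    have ginj : Function.Injective g := by
      intro x x' h
      have := hdeg (X x) (X x') (Y (g x)) (hgF x) (by rw [h]; exact hgF x')
      simpa [X] using this
    -- every V vertex has an in-neighbor from Y, not hit by any X
    have hVin : ∀ c : (Fin k ⊕ Fin k) ⊕ Fin k,
        ∃ y : Fin m, F (Y y) (Sum.inl c) ∧ ∀ x, ¬ F (X x) (Y y) := by
      intro c
      have h := hodd (Sum.inl c)
      have hout0 : {w | F (Sum.inl c) w} = ∅ := by
        ext w; simp only [Set.mem_setOf_eq, Set.mem_empty_iff_false, iff_false]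
        exact fun hF => noVout c w hF
      rw [udeg, hout0, Set.ncard_empty, Nat.zero_add] at h
      obtain ⟨w, hw⟩ := odd_ncard_nonempty h
      rcases w with c' | x | y
      · exact absurd (hsub hw) (fun h => h)
      · exact absurd (lemB x c (sameTree_of_arc hw)) (fun h => h)
      · refine ⟨y, hw, fun x hF => ?_⟩
        exact lemB x c ((sameTree_of_arc hF).trans (sameTree_of_arc hw))
    set S : Finset (Fin m) :=
      Finset.univ.filter (fun y => ∀ x, ¬ F (X x) (Y y)) with hS
    have hScompl : S = (Finset.image g Finset.univ)ᶜ := by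
      ext y
      simp only [hS, Finset.mem_filter, Finset.mem_univ, true_and,
        Finset.mem_compl, Finset.mem_image, not_exists]
      constructor
      · intro h x hx
        exact h x (hx ▸ hgF x)
      · intro h x hF
        exact h x (hXuniq x (g x) y (hgF x) hF)
    have hScard : S.card = k := by
      rw [hScompl, Finset.card_compl, Finset.card_image_of_injective _ ginj]
      simp only [Finset.card_univ, Fintype.card_fin]
      omega
    refine ⟨S, hScard, ?_, ?_, ?_⟩
    · intro a
      obtain ⟨y, hF, hnx⟩ := hVin (Sum.inl (Sum.inl a))
      exact ⟨y, by simp [hS, hnx], hsub hF⟩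
    · intro a
      obtain ⟨y, hF, hnx⟩ := hVin (Sum.inl (Sum.inr a))
      exact ⟨y, by simp [hS, hnx], hsub hF⟩
    · intro a
      obtain ⟨y, hF, hnx⟩ := hVin (Sum.inr a)
      exact ⟨y, by simp [hS, hnx], hsub hF⟩
  · rintro ⟨S, hScard, h1, h2, h3⟩
    classical
    -- injectivity of coordinate maps on S
    have inj1 : Set.InjOn (fun y => (E y).1) S := by
      apply Finset.card_image_iff.mp
      have himg : S.image (fun y => (E y).1) = Finset.univ :=
        Finset.eq_univ_iff_forall.mpr fun a => Finset.mem_image.mpr (h1 a)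
      rw [himg, Finset.card_univ, Fintype.card_fin, hScard]
    have inj2 : Set.InjOn (fun y => (E y).2.1) S := by
      apply Finset.card_image_iff.mp
      have himg : S.image (fun y => (E y).2.1) = Finset.univ :=
        Finset.eq_univ_iff_forall.mpr fun a => Finset.mem_image.mpr (h2 a)
      rw [himg, Finset.card_univ, Fintype.card_fin, hScard]
    have inj3 : Set.InjOn (fun y => (E y).2.2) S := by
      apply Finset.card_image_iff.mp
      have himg : S.image (fun y => (E y).2.2) = Finset.univ :=
        Finset.eq_univ_iff_forall.mpr fun a => Finset.mem_image.mpr (h3 a)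
      rw [himg, Finset.card_univ, Fintype.card_fin, hScard]
    set y1 : Fin k → Fin m := fun a => (h1 a).choose with hy1def
    set y2 : Fin k → Fin m := fun a => (h2 a).choose with hy2def
    set y3 : Fin k → Fin m := fun a => (h3 a).choose with hy3def
    have s1 : ∀ a, y1 a ∈ S ∧ (E (y1 a)).1 = a := fun a => (h1 a).choose_spec
    have s2 : ∀ a, y2 a ∈ S ∧ (E (y2 a)).2.1 = a := fun a => (h2 a).choose_spec
    have s3 : ∀ a, y3 a ∈ S ∧ (E (y3 a)).2.2 = a := fun a => (h3 a).choose_spec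
    -- bijection from X to the complement of S
    have hcc : (Sᶜ : Finset (Fin m)).card = m - k := by
      rw [Finset.card_compl, hScard]; simp
    set ψ := (Finset.equivFinOfCardEq hcc).symm with hψ
    set g : Fin (m - k) → Fin m := fun x => (ψ x : Fin m) with hgdef
    have hgout : ∀ x, g x ∉ S := fun x => Finset.mem_compl.mp (ψ x).2
    have ginj : Function.Injective g := fun a b h => ψ.injective (Subtype.ext h)
    have gsurj : ∀ y ∉ S, ∃ x, g x = y := fun y hy =>
      ⟨ψ.symm ⟨y, Finset.mem_compl.mpr hy⟩, by simp [hgdef]⟩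
    refine ⟨Fcon k m E S g, ?_, ⟨?_, ?_⟩, ?_, ?_⟩
    · -- Subd
      intro a b h
      rcases a with ((i | i) | i) | (x | y) <;> rcases b with ((j | j) | j) | (x' | y') <;>
        first
          | exact h.elim
          | trivial
          | exact h.2
    · -- acyclic
      have hrk : ∀ a b, Fcon k m E S g a b → rnk a < rnk b := by
        intro a b h
        rcases a with ((i | i) | i) | (x | y) <;> rcases b with ((j | j) | j) | (x' | y') <;>
          first
            | exact h.elim
            | exact Nat.zero_lt_one
            | exact Nat.one_lt_two
      have htr : ∀ a b, Relation.TransGen (Fcon k m E S g) a b → rnk a < rnk b := by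
        intro a b h
        induction h with
        | single h => exact hrk _ _ h
        | tail _ h2 ih => exact ih.trans (hrk _ _ h2)
      intro a ha
      exact lt_irrefl _ (htr a a ha)
    · -- in-degree ≤ 1
      intro u v w hu hv
      rcases u with ((i | i) | i) | (x | y) <;> rcases v with ((j | j) | j) | (x' | y') <;>
        rcases w with ((l | l) | l) | (x'' | y'') <;>
        first
          | exact hu.elim
          | exact hv.elim
          | exact congrArg (fun t => (Sum.inr (Sum.inl t) : Vtx k m)) (ginj (hu.trans hv.symm))
          | exact congrArg (fun t => (Sum.inr (Sum.inr t) : Vtx k m)) (inj1 hu.1 hv.1 (hu.2.trans hv.2.symm))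
          | exact congrArg (fun t => (Sum.inr (Sum.inr t) : Vtx k m)) (inj2 hu.1 hv.1 (hu.2.trans hv.2.symm))
          | exact congrArg (fun t => (Sum.inr (Sum.inr t) : Vtx k m)) (inj3 hu.1 hv.1 (hu.2.trans hv.2.symm))
    · -- all degrees odd
      intro v
      rcases v with ((i | i) | i) | (x | y)
      · -- V1 i
        have hout : {w | Fcon k m E S g (Sum.inl (Sum.inl (Sum.inl i))) w} = ∅ := by
          ext w
          simp only [Set.mem_setOf_eq, Set.mem_empty_iff_false, iff_false]
          rcases w with ((j | j) | j) | (x | y) <;> exact fun h => h.elim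
        have hin : {w | Fcon k m E S g w (Sum.inl (Sum.inl (Sum.inl i)))} =
            {Sum.inr (Sum.inr (y1 i))} := by
          ext w
          simp only [Set.mem_setOf_eq, Set.mem_singleton_iff]
          rcases w with ((j | j) | j) | (x | y) <;>
            first
              | exact ⟨fun h => h.elim, fun h => by simp at h⟩
              | · constructor
                  · intro h
                    simp only [Sum.inr.injEq]
                    exact inj1 h.1 (s1 i).1 (h.2.trans (s1 i).2.symm)
                  · intro h
                    simp only [Sum.inr.injEq] at h
                    subst h
                    exact ⟨(s1 i).1, (s1 i).2⟩
        rw [udeg, hout, hin, Set.ncard_empty, Set.ncard_singleton]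
        exact odd_one
      · -- V2 i
        have hout : {w | Fcon k m E S g (Sum.inl (Sum.inl (Sum.inr i))) w} = ∅ := by
          ext w
          simp only [Set.mem_setOf_eq, Set.mem_empty_iff_false, iff_false]
          rcases w with ((j | j) | j) | (x | y) <;> exact fun h => h.elim
        have hin : {w | Fcon k m E S g w (Sum.inl (Sum.inl (Sum.inr i)))} =
            {Sum.inr (Sum.inr (y2 i))} := by
          ext w
          simp only [Set.mem_setOf_eq, Set.mem_singleton_iff]
          rcases w with ((j | j) | j) | (x | y) <;>
            first
              | exact ⟨fun h => h.elim, fun h => by simp at h⟩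
              | · constructor
                  · intro h
                    simp only [Sum.inr.injEq]
                    exact inj2 h.1 (s2 i).1 (h.2.trans (s2 i).2.symm)
                  · intro h
                    simp only [Sum.inr.injEq] at h
                    subst h
                    exact ⟨(s2 i).1, (s2 i).2⟩
        rw [udeg, hout, hin, Set.ncard_empty, Set.ncard_singleton]
        exact odd_one
      · -- V3 i
        have hout : {w | Fcon k m E S g (Sum.inl (Sum.inr i)) w} = ∅ := by
          ext w
          simp only [Set.mem_setOf_eq, Set.mem_empty_iff_false, iff_false]
          rcases w with ((j | j) | j) | (x | y) <;> exact fun h => h.elim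
        have hin : {w | Fcon k m E S g w (Sum.inl (Sum.inr i))} =
            {Sum.inr (Sum.inr (y3 i))} := by
          ext w
          simp only [Set.mem_setOf_eq, Set.mem_singleton_iff]
          rcases w with ((j | j) | j) | (x | y) <;>
            first
              | exact ⟨fun h => h.elim, fun h => by simp at h⟩
              | · constructor
                  · intro h
                    simp only [Sum.inr.injEq]
                    exact inj3 h.1 (s3 i).1 (h.2.trans (s3 i).2.symm)
                  · intro h
                    simp only [Sum.inr.injEq] at h
                    subst h
                    exact ⟨(s3 i).1, (s3 i).2⟩
        rw [udeg, hout, hin, Set.ncard_empty, Set.ncard_singleton]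
        exact odd_one
      · -- X x
        have hout : {w | Fcon k m E S g (Sum.inr (Sum.inl x)) w} =
            {Sum.inr (Sum.inr (g x))} := by
          ext w
          simp only [Set.mem_setOf_eq, Set.mem_singleton_iff]
          rcases w with ((j | j) | j) | (x' | y) <;>
            first
              | exact ⟨fun h => h.elim, fun h => by simp at h⟩
              | · constructor
                  · intro h
                    simp only [Sum.inr.injEq]
                    exact h.symm
                  · intro h
                    simp only [Sum.inr.injEq] at h
                    exact h.symm
        have hin : {w | Fcon k m E S g w (Sum.inr (Sum.inl x))} = ∅ := by
          ext w
          simp only [Set.mem_setOf_eq, Set.mem_empty_iff_false, iff_false]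
          rcases w with ((j | j) | j) | (x' | y) <;> exact fun h => h.elim
        rw [udeg, hout, hin, Set.ncard_empty, Set.ncard_singleton]
        exact odd_one
      · -- Y y
        by_cases hyS : y ∈ S
        · have hout : {w | Fcon k m E S g (Sum.inr (Sum.inr y)) w} =
              {Sum.inl (Sum.inl (Sum.inl (E y).1)), Sum.inl (Sum.inl (Sum.inr (E y).2.1)),
                Sum.inl (Sum.inr (E y).2.2)} := by
            ext w
            simp only [Set.mem_setOf_eq, Set.mem_insert_iff, Set.mem_singleton_iff]
            rcases w with ((j | j) | j) | (x | y') <;>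
              first
                | exact ⟨fun h => h.elim, fun h => by simp at h⟩
                | · constructor
                    · intro h
                      simp only [Sum.inl.injEq, Sum.inr.injEq, reduceCtorEq, or_false, false_or]
                      exact h.2.symm
                    · intro h
                      simp only [Sum.inl.injEq, Sum.inr.injEq, reduceCtorEq, or_false, false_or] at h
                      exact ⟨hyS, h.symm⟩
          have hin : {w | Fcon k m E S g w (Sum.inr (Sum.inr y))} = ∅ := by
            ext w
            simp only [Set.mem_setOf_eq, Set.mem_empty_iff_false, iff_false]
            rcases w with ((j | j) | j) | (x | y') <;>
              first
                | exact fun h => h.elim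
                | exact fun h => hgout x (h ▸ hyS)
          rw [udeg, hout, hin, Set.ncard_empty,
            Set.ncard_insert_of_notMem (by simp) (Set.toFinite _), Set.ncard_pair (by simp)]
          exact ⟨1, rfl⟩
        · obtain ⟨x0, hx0⟩ := gsurj y hyS
          have hout : {w | Fcon k m E S g (Sum.inr (Sum.inr y)) w} = ∅ := by
            ext w
            simp only [Set.mem_setOf_eq, Set.mem_empty_iff_false, iff_false]
            rcases w with ((j | j) | j) | (x | y') <;>
              first
                | exact fun h => h.elim
                | exact fun h => hyS h.1
          have hin : {w | Fcon k m E S g w (Sum.inr (Sum.inr y))} =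
              {Sum.inr (Sum.inl x0)} := by
            ext w
            simp only [Set.mem_setOf_eq, Set.mem_singleton_iff]
            rcases w with ((j | j) | j) | (x | y') <;>
              first
                | exact ⟨fun h => h.elim, fun h => by simp at h⟩
                | · constructor
                    · intro h
                      simp only [Sum.inr.injEq, Sum.inl.injEq]
                      exact ginj (h.trans hx0.symm)
                    · intro h
                      simp only [Sum.inr.injEq, Sum.inl.injEq] at h
                      subst h
                      exact hx0
          rw [udeg, hout, hin, Set.ncard_empty, Set.ncard_singleton]
          exact odd_one
    · -- induced
      have hc : ∀ a b, Fcon k m E S g a b →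
          cmpv y1 y2 y3 g a = cmpv y1 y2 y3 g b := by
        intro a b h
        rcases a with ((i | i) | i) | (x | y) <;> rcases b with ((j | j) | j) | (x' | y') <;>
          first
            | exact h.elim
            | exact h
            | exact inj1 h.1 (s1 j).1 (h.2.trans (s1 j).2.symm)
            | exact inj2 h.1 (s2 j).1 (h.2.trans (s2 j).2.symm)
            | exact inj3 h.1 (s3 j).1 (h.2.trans (s3 j).2.symm)
      have hcs : ∀ a b, SameTree (Fcon k m E S g) a b →
          cmpv y1 y2 y3 g a = cmpv y1 y2 y3 g b := by
        intro a b h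
        induction h with
        | refl => rfl
        | tail _ h2 ih =>
          rcases h2 with h2 | h2
          · exact ih.trans (hc _ _ h2)
          · exact ih.trans (hc _ _ h2).symm
      intro a b hst hD
      rcases a with ((i | i) | i) | (x | y) <;> rcases b with ((j | j) | j) | (x' | y')
      all_goals try exact hD.elim
      case inl.inl.inl.inr.inl =>
        have cm : y1 i = g x' := hcs _ _ hst
        exact (hgout x' (cm ▸ (s1 i).1)).elim
      case inl.inl.inr.inr.inl =>
        have cm : y2 i = g x' := hcs _ _ hst
        exact (hgout x' (cm ▸ (s2 i).1)).elim
      case inl.inr.inr.inl =>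
        have cm : y3 i = g x' := hcs _ _ hst
        exact (hgout x' (cm ▸ (s3 i).1)).elim
      case inr.inl.inl.inl.inl =>
        have cm : g x = y1 j := hcs _ _ hst
        exact (hgout x (cm ▸ (s1 j).1)).elim
      case inr.inl.inl.inl.inr =>
        have cm : g x = y2 j := hcs _ _ hst
        exact (hgout x (cm ▸ (s2 j).1)).elim
      case inr.inl.inl.inr =>
        have cm : g x = y3 j := hcs _ _ hst
        exact (hgout x (cm ▸ (s3 j).1)).elim
      case inr.inl.inr.inr =>
        exact hcs _ _ hst
      case inr.inr.inl.inl.inl =>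
        have cm : y = y1 j := hcs _ _ hst
        exact ⟨cm ▸ (s1 j).1, hD⟩
      case inr.inr.inl.inl.inr =>
        have cm : y = y2 j := hcs _ _ hst
        exact ⟨cm ▸ (s2 j).1, hD⟩
      case inr.inr.inl.inr =>
        have cm : y = y3 j := hcs _ _ hst
        exact ⟨cm ▸ (s3 j).1, hD⟩
      case inr.inr.inr.inr =>
        exact (hD (hcs _ _ hst)).elim
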